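/- arXiv:2602.16522 — 6 statements merged into one kernel-verified Lean document; each statement's English description precedes it below -/
import Mathlib

section
/- If x is in a cycle of the variable transition graph of a substitution σ (i.e., x occurs in xσ^k for some k > 0) and xσ is not a variable, then the terms x, xσ, xσ², ... are pairwise distinct. -/
/-- First-order terms over a signature `S` with variables `V`. -/
inductive Tm (S V : Type) : Type
  | var : V → Tm S V
  | app : S → List (Tm S V) → Tm S V

namespace Tm
variable {S V : Type}

/-- Applying a substitution `σ : V → Tm S V` homomorphically to a term. -/
def subst (σ : V → Tm S V) : Tm S V → Tm S V
  | var x => σ x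
  | app f ts => app f (ts.attach.map fun u => subst σ u.1)
decreasing_by
  have := List.sizeOf_lt_of_mem u.2
  simp only [Tm.app.sizeOf_spec]
  omega

/-- The variable `x` occurs in the term `t`. -/
inductive Occurs (x : V) : Tm S V → Prop
  | var : Occurs x (var x)
  | app {f : S} {ts : List (Tm S V)} {t : Tm S V} :
      t ∈ ts → Occurs x t → Occurs x (app f ts)

/-- `iter σ n t` is `t σⁿ`, the `n`-fold application of `σ` to `t`. -/
def iter (σ : V → Tm S V) (n : ℕ) (t : Tm S V) : Tm S V :=
  (subst σ)^[n] t

end Tm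

/-
If `x` occurs in `xσᵏ` (`k > 0`) and `xσ` is not a variable, then `x` occurs strictly below
the root of `xσᵏ`, so `xσᵐ` is a proper subterm of `xσᵐ⁺ᵏ = (xσᵏ)σᵐ`. Hence the sizes of
`xσᵐ, xσᵐ⁺ᵏ, xσᵐ⁺²ᵏ, …` increase strictly. If `xσᵐ = xσᵐ'` with `m < m'`, then `xσᵐ` is a
periodic point of `σ` of period `m' - m`, hence of period `(m' - m) k`, contradicting this growth.
-/

namespace Tm
variable {S V : Type}

@[simp]
theorem subst_var (σ : V → Tm S V) (x : V) : subst σ (var x) = σ x := by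
  rw [subst]

@[simp]
theorem subst_app (σ : V → Tm S V) (f : S) (ts : List (Tm S V)) :
    subst σ (app f ts) = app f (ts.map (subst σ)) := by
  rw [subst, List.attach_map_val]

theorem iter_zero (σ : V → Tm S V) : iter σ 0 = id :=
  rfl

theorem iter_succ' (σ : V → Tm S V) (n : ℕ) : iter σ (n + 1) = subst σ ∘ iter σ n :=
  Function.iterate_succ' _ _

theorem iter_succ (σ : V → Tm S V) (n : ℕ) (t : Tm S V) :
    iter σ (n + 1) t = iter σ n (subst σ t) :=
  Function.iterate_succ_apply _ _ _

theorem iter_app (σ : V → Tm S V) (n : ℕ) (f : S) (ts : List (Tm S V)) :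
    iter σ n (app f ts) = app f (ts.map (iter σ n)) := by
  induction n with
  | zero => simp [iter_zero]
  | succ n ih => rw [iter_succ', Function.comp_apply, ih, subst_app, List.map_map]

theorem iter_add (σ : V → Tm S V) (m n : ℕ) (t : Tm S V) :
    iter σ (m + n) t = iter σ m (iter σ n t) :=
  Function.iterate_add_apply _ _ _ _

theorem iter_succ_var_ne_var {σ : V → Tm S V} {x : V} (hσ : ∀ y, σ x ≠ var y) (n : ℕ) (y : V) :
    iter σ (n + 1) (var x) ≠ var y := by
  rw [iter_succ, subst_var]
  cases h : σ x with
  | var z => exact absurd h (hσ z)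
  | app f ts => rw [iter_app]; exact nofun

theorem sizeOf_lt_sizeOf_app {t : Tm S V} {f : S} {ts : List (Tm S V)} (h : t ∈ ts) :
    sizeOf t < sizeOf (app f ts) := by
  have := List.sizeOf_lt_of_mem h
  simp only [app.sizeOf_spec]
  omega

theorem sizeOf_iter_var_le_of_occurs (σ : V → Tm S V) (n : ℕ) {x : V} {t : Tm S V}
    (h : Occurs x t) : sizeOf (iter σ n (var x)) ≤ sizeOf (iter σ n t) := by
  induction h with
  | var => rfl
  | app hmem _ ih =>
    rw [iter_app]
    exact ih.trans (sizeOf_lt_sizeOf_app (List.mem_map_of_mem hmem)).le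

theorem sizeOf_iter_var_lt_of_occurs (σ : V → Tm S V) (n : ℕ) {x : V} {t : Tm S V}
    (h : Occurs x t) (hne : t ≠ var x) : sizeOf (iter σ n (var x)) < sizeOf (iter σ n t) := by
  cases h with
  | var => exact absurd rfl hne
  | app hmem hocc =>
    rw [iter_app]
    exact (sizeOf_iter_var_le_of_occurs σ n hocc).trans_lt
      (sizeOf_lt_sizeOf_app (List.mem_map_of_mem hmem))

theorem sizeOf_iter_var_lt_add_mul {σ : V → Tm S V} {x : V} {k : ℕ}
    (hocc : Occurs x (iter σ k (var x))) (hne : iter σ k (var x) ≠ var x) (m : ℕ) {j : ℕ}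
    (hj : 0 < j) : sizeOf (iter σ m (var x)) < sizeOf (iter σ (m + j * k) (var x)) := by
  have step : StrictMono fun i => sizeOf (iter σ (m + i * k) (var x)) :=
    strictMono_nat_of_lt_succ fun i => by
      simp only [add_one_mul, ← add_assoc, iter_add σ _ k]
      exact sizeOf_iter_var_lt_of_occurs σ _ hocc hne
  simpa using step hj

end Tm

/-- If `x` lies on a cycle of the variable transition graph of `σ`
(i.e. `x` occurs in `x σᵏ` for some `k > 0`) and `x σ` is not a variable,
then the terms `x, xσ, xσ², …` are pairwise distinct. -/
theorem cycle_var_iterates_pairwise_distinct {S V : Type} (σ : V → Tm S V) (x : V)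
    (hcycle : ∃ k : ℕ, 0 < k ∧ Tm.Occurs x (Tm.iter σ k (Tm.var x)))
    (hnotvar : ∀ y : V, σ x ≠ Tm.var y) :
    ∀ m m' : ℕ, m ≠ m' → Tm.iter σ m (Tm.var x) ≠ Tm.iter σ m' (Tm.var x) := by
  obtain ⟨k, hk, hocc⟩ := hcycle
  have hne : Tm.iter σ k (Tm.var x) ≠ Tm.var x := by
    obtain ⟨n, rfl⟩ := Nat.exists_eq_add_one_of_ne_zero hk.ne'
    exact Tm.iter_succ_var_ne_var hnotvar n x
  suffices h : ∀ m m', m < m' → Tm.iter σ m (Tm.var x) ≠ Tm.iter σ m' (Tm.var x) from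
    fun m m' hmm' => hmm'.lt_or_gt.elim (h m m') fun hlt => (h m' m hlt).symm
  intro m m' hlt heq
  have hper : Function.IsPeriodicPt (Tm.subst σ) (m' - m) (Tm.iter σ m (Tm.var x)) := by
    rw [Function.IsPeriodicPt, Function.IsFixedPt, ← Tm.iter, ← Tm.iter_add,
      Nat.sub_add_cancel hlt.le, heq]
  have hback : Tm.iter σ (m + (m' - m) * k) (Tm.var x) = Tm.iter σ m (Tm.var x) := by
    rw [add_comm, Tm.iter_add]; exact (hper.mul_const k).eq
  exact (Tm.sizeOf_iter_var_lt_add_mul hocc hne m (Nat.sub_pos_of_lt hlt)).ne'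
    (congrArg sizeOf hback)
end

section
/- Let μ : ℤ → ℝ≥0 be a probability mass function with finite support defining a random walk on ℤ that is absorbed at values ≤ 0, and suppose μ(0) < 1. If the expected increment E(μ) = Σ_x x·μ(x) is strictly positive, then starting from any x₀ ≥ 1 the probability that the walk ever reaches a value ≤ 0 is strictly less than 1. -/
/-!
Choose `θ ∈ (0, 1)` with `∑ x, μ x * θ ^ x ≤ 1`; it exists because this generating function
equals `1` at `θ = 1` with derivative `E(μ) > 0` there. Then `y ↦ θ ^ y` is `≥ 1` on the
absorbing states `y ≤ 0` and superharmonic elsewhere, so by induction it dominates every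
`probWithin μ Sup n`, and the termination probability from `x₀ ≥ 1` is at most `θ ^ x₀ ≤ θ < 1`.
-/

/-- `probWithin μ Sup n y` is the probability that the random walk with step
distribution `μ` (with support contained in the finite set `Sup`), started at `y`
and absorbed at values `≤ 0`, reaches a value `≤ 0` within `n` steps. -/
noncomputable def probWithin (μ : ℤ → ℝ) (Sup : Finset ℤ) : ℕ → ℤ → ℝ
  | 0, y => if y ≤ 0 then 1 else 0
  | n + 1, y => if y ≤ 0 then 1 else ∑ x ∈ Sup, μ x * probWithin μ Sup n (y + x)

/-- The probability that the random walk started at `x₀` ever reaches a value `≤ 0`. -/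
noncomputable def termProb (μ : ℤ → ℝ) (Sup : Finset ℤ) (x₀ : ℤ) : ℝ :=
  ⨆ n : ℕ, probWithin μ Sup n x₀

open Filter Set Topology

theorem HasDerivAt.eventually_nhdsLT_lt {f : ℝ → ℝ} {f' a : ℝ} (hf : HasDerivAt f f' a)
    (hf' : 0 < f') : ∀ᶠ t in 𝓝[<] a, f t < f a := by
  have hslope : ∀ᶠ t in 𝓝[<] a, 0 < slope f a t :=
    ((hasDerivAt_iff_tendsto_slope.mp hf).mono_left (nhdsLT_le_nhdsNE a)).eventually
      (eventually_gt_nhds hf')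
  filter_upwards [hslope, self_mem_nhdsWithin] with t hpos (ht : t < a)
  exact (slope_pos_iff_gt ht).mp hpos

theorem hasDerivAt_sum_mul_zpow_one (s : Finset ℤ) (w : ℤ → ℝ) :
    HasDerivAt (fun t : ℝ => ∑ x ∈ s, w x * t ^ x) (∑ x ∈ s, (x : ℝ) * w x) 1 := by
  have h := HasDerivAt.fun_sum (u := s) fun x _ =>
    (hasDerivAt_zpow x (1 : ℝ) (Or.inl one_ne_zero)).const_mul (w x)
  simpa [mul_comm] using h

theorem exists_sum_mul_zpow_lt_one {s : Finset ℤ} {w : ℤ → ℝ} (hsum : ∑ x ∈ s, w x = 1)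
    (hE : 0 < ∑ x ∈ s, (x : ℝ) * w x) :
    ∃ θ ∈ Ioo (0 : ℝ) 1, ∑ x ∈ s, w x * θ ^ x < 1 := by
  have hlt := (hasDerivAt_sum_mul_zpow_one s w).eventually_nhdsLT_lt hE
  obtain ⟨θ, hθ, hθ_mem⟩ := (hlt.and (Ioo_mem_nhdsLT (zero_lt_one' ℝ))).exists
  refine ⟨θ, hθ_mem, ?_⟩
  simpa [hsum] using hθ

theorem probWithin_le_zpow {μ : ℤ → ℝ} {Sup : Finset ℤ} (hnn : ∀ x, 0 ≤ μ x) {θ : ℝ}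
    (hθ0 : 0 < θ) (hθ1 : θ ≤ 1) (hθ : ∑ x ∈ Sup, μ x * θ ^ x ≤ 1) (n : ℕ) (y : ℤ) :
    probWithin μ Sup n y ≤ θ ^ y := by
  induction n generalizing y with
  | zero =>
    by_cases hy : y ≤ 0
    · simpa [probWithin, hy] using one_le_zpow_of_nonpos₀ hθ0 hθ1 hy
    · simpa [probWithin, hy] using (zpow_pos hθ0 y).le
  | succ n ih =>
    by_cases hy : y ≤ 0
    · simpa [probWithin, hy] using one_le_zpow_of_nonpos₀ hθ0 hθ1 hy
    · simp only [probWithin, hy, if_false]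
      calc ∑ x ∈ Sup, μ x * probWithin μ Sup n (y + x)
          ≤ ∑ x ∈ Sup, μ x * θ ^ (y + x) :=
            Finset.sum_le_sum fun x _ => mul_le_mul_of_nonneg_left (ih (y + x)) (hnn x)
        _ = θ ^ y * ∑ x ∈ Sup, μ x * θ ^ x := by
            rw [Finset.mul_sum]
            refine Finset.sum_congr rfl fun x _ => ?_
            rw [zpow_add₀ hθ0.ne']
            ring
        _ ≤ θ ^ y := mul_le_of_le_one_right (zpow_pos hθ0 y).le hθ

theorem termProb_le_zpow {μ : ℤ → ℝ} {Sup : Finset ℤ} (hnn : ∀ x, 0 ≤ μ x) {θ : ℝ}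
    (hθ0 : 0 < θ) (hθ1 : θ ≤ 1) (hθ : ∑ x ∈ Sup, μ x * θ ^ x ≤ 1) (x₀ : ℤ) :
    termProb μ Sup x₀ ≤ θ ^ x₀ :=
  ciSup_le fun n => probWithin_le_zpow hnn hθ0 hθ1 hθ n x₀

theorem termProb_lt_one_of_pos_drift_general (μ : ℤ → ℝ) (Sup : Finset ℤ)
    (hnn : ∀ x : ℤ, 0 ≤ μ x) (hsum : ∑ x ∈ Sup, μ x = 1)
    (hE : 0 < ∑ x ∈ Sup, (x : ℝ) * μ x) :
    ∀ x₀ : ℤ, 1 ≤ x₀ → termProb μ Sup x₀ < 1 := by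
  obtain ⟨θ, ⟨hθ0, hθ1⟩, hθ⟩ := exists_sum_mul_zpow_lt_one hsum hE
  intro x₀ hx₀
  calc termProb μ Sup x₀ ≤ θ ^ x₀ := termProb_le_zpow hnn hθ0 hθ1.le hθ.le x₀
    _ ≤ θ ^ (1 : ℤ) := zpow_le_zpow_right_of_le_one₀ hθ0 hθ1.le hx₀
    _ = θ := zpow_one θ
    _ < 1 := hθ1

/-- If `μ 0 < 1` and the expected increment is strictly positive, then from any
start `x₀ ≥ 1` the probability that the walk ever reaches a value `≤ 0` is `< 1`. -/
theorem termProb_lt_one_of_pos_drift (μ : ℤ → ℝ) (Sup : Finset ℤ)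
    (hnn : ∀ x : ℤ, 0 ≤ μ x) (hsupp : ∀ x ∉ Sup, μ x = 0)
    (hsum : ∑ x ∈ Sup, μ x = 1) (h0 : μ 0 < 1)
    (hE : 0 < ∑ x ∈ Sup, (x : ℝ) * μ x) :
    ∀ x₀ : ℤ, 1 ≤ x₀ → termProb μ Sup x₀ < 1 :=
  termProb_lt_one_of_pos_drift_general μ Sup hnn hsum hE
end

section
/- Let μ : ℤ → ℝ≥0 be a probability mass function with finite support defining a random walk on ℤ absorbed at values ≤ 0, with μ(0) < 1 and expected increment Σ_x x·μ(x) = 0. Then starting from any x₀ the walk reaches a value ≤ 0 with probability 1, but the expected number of steps until absorption is infinite for x₀ ≥ 1. -/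
/-!
The steps are bounded by some `M` and centred, so the walk is a martingale until it is absorbed.
Started at `x₀ ∈ (0, K)`, it leaves `(0, K)` almost surely: `K` consecutive steps equal to a fixed
nonzero step `s` lead out from anywhere inside, so it stays inside for `m K` steps with probability
at most `(1 - μ(s) ^ K) ^ m`. By optional stopping it leaves through the top with probability at
most `(x₀ + M) / K`; hence it is absorbed with probability at least `1 - (x₀ + M) / K` for every `K`.
Optional stopping at time `n` gives `x₀ ≤ (x₀ + M n) P(T > n)`, so `P(T > n)` is not `o(1 / n)`,
whereas a summable antitone sequence satisfies `n a₂ₙ → 0`.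
-/

open Finset Filter Topology

theorem Antitone.tendsto_mul_apply_two_mul {f : ℕ → ℝ} (hf : Antitone f) (hs : Summable f) :
    Tendsto (fun n : ℕ => n * f (2 * n)) atTop (𝓝 0) := by
  have hbound (n : ℕ) :
      n * f (2 * n) ≤ ∑ i ∈ range (2 * n), f i - ∑ i ∈ range n, f i := by
    rw [← sum_range_add_sum_Ico f (by omega : n ≤ 2 * n), add_sub_cancel_left]
    calc (n : ℝ) * f (2 * n) = ∑ _i ∈ Ico n (2 * n), f (2 * n) := by
          rw [sum_const, Nat.card_Ico, nsmul_eq_mul]; congr; omega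
      _ ≤ ∑ i ∈ Ico n (2 * n), f i := sum_le_sum fun i hi => hf (mem_Ico.1 hi).2.le
  have htail : Tendsto (fun n => ∑ i ∈ range (2 * n), f i - ∑ i ∈ range n, f i) atTop (𝓝 0) := by
    have h := hs.hasSum.tendsto_sum_nat
    simpa using (h.comp (tendsto_id.const_mul_atTop' two_pos)).sub h
  exact squeeze_zero (fun n => mul_nonneg n.cast_nonneg (hf.le_of_tendsto hs.tendsto_atTop_zero _))
    hbound htail

section

variable {μ : ℤ → ℝ} {Sup : Finset ℤ}

theorem exists_mem_ne_zero_pos (hnn : ∀ x, 0 ≤ μ x) (hsum : ∑ x ∈ Sup, μ x = 1) (h0 : μ 0 < 1) :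
    ∃ s ∈ Sup, s ≠ 0 ∧ 0 < μ s := by
  by_contra! h
  have hzero : ∀ x ∈ Sup, x ≠ 0 → μ x = 0 := fun x hx hx0 => (h x hx hx0).antisymm (hnn x)
  by_cases h0Sup : 0 ∈ Sup
  · rw [sum_eq_single_of_mem 0 h0Sup hzero] at hsum
    linarith
  · rw [sum_eq_zero fun x hx => hzero x hx (ne_of_mem_of_not_mem hx h0Sup)] at hsum
    norm_num at hsum

theorem apply_le_one_of_mem (hnn : ∀ x, 0 ≤ μ x) (hsum : ∑ x ∈ Sup, μ x = 1) {s : ℤ}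
    (hs : s ∈ Sup) : μ s ≤ 1 :=
  hsum ▸ single_le_sum (fun x _ => hnn x) hs

theorem sum_mul_add_eq_self (hsum : ∑ x ∈ Sup, μ x = 1) (hE : ∑ x ∈ Sup, (x : ℝ) * μ x = 0)
    (y : ℝ) : ∑ x ∈ Sup, μ x * (y + x) = y := by
  rw [sum_congr rfl fun x _ => (by ring : μ x * (y + x) = y * μ x + x * μ x), sum_add_distrib,
    ← mul_sum, hsum, hE, mul_one, add_zero]

theorem probWithin_of_nonpos {y : ℤ} (hy : y ≤ 0) (n : ℕ) : probWithin μ Sup n y = 1 := by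
  cases n <;> simp [probWithin, hy]

theorem probWithin_succ_of_pos {y : ℤ} (hy : 0 < y) (n : ℕ) :
    probWithin μ Sup (n + 1) y = ∑ x ∈ Sup, μ x * probWithin μ Sup n (y + x) :=
  if_neg hy.not_ge

theorem probWithin_nonneg (hnn : ∀ x, 0 ≤ μ x) (n : ℕ) (y : ℤ) : 0 ≤ probWithin μ Sup n y := by
  induction n generalizing y with
  | zero => simp only [probWithin]; positivity
  | succ n ih =>
    rcases le_or_gt y 0 with hy | hy
    · simp [probWithin_of_nonpos hy]
    · rw [probWithin_succ_of_pos hy]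
      exact sum_nonneg fun x _ => mul_nonneg (hnn x) (ih _)

theorem probWithin_le_one (hnn : ∀ x, 0 ≤ μ x) (hsum : ∑ x ∈ Sup, μ x = 1) (n : ℕ) (y : ℤ) :
    probWithin μ Sup n y ≤ 1 := by
  induction n generalizing y with
  | zero => simp only [probWithin]; split_ifs <;> norm_num
  | succ n ih =>
    rcases le_or_gt y 0 with hy | hy
    · simp [probWithin_of_nonpos hy]
    · rw [probWithin_succ_of_pos hy, ← hsum]
      exact sum_le_sum fun x _ => mul_le_of_le_one_right (hnn x) (ih _)

theorem probWithin_mono (hnn : ∀ x, 0 ≤ μ x) (y : ℤ) :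
    Monotone fun n => probWithin μ Sup n y := by
  refine monotone_nat_of_le_succ fun n => ?_
  induction n generalizing y with
  | zero =>
    rcases le_or_gt y 0 with hy | hy
    · simp [probWithin_of_nonpos hy]
    · rw [show probWithin μ Sup 0 y = 0 from if_neg hy.not_ge]
      exact probWithin_nonneg hnn 1 y
  | succ n ih =>
    rcases le_or_gt y 0 with hy | hy
    · simp [probWithin_of_nonpos hy]
    · rw [probWithin_succ_of_pos hy, probWithin_succ_of_pos hy]
      exact sum_le_sum fun x _ => mul_le_mul_of_nonneg_left (ih _) (hnn x)

theorem probWithin_le_termProb (hnn : ∀ x, 0 ≤ μ x) (hsum : ∑ x ∈ Sup, μ x = 1) (n : ℕ)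
    (x₀ : ℤ) : probWithin μ Sup n x₀ ≤ termProb μ Sup x₀ :=
  le_ciSup ⟨1, Set.forall_mem_range.2 fun n => probWithin_le_one hnn hsum n x₀⟩ n

theorem termProb_le_one (hnn : ∀ x, 0 ≤ μ x) (hsum : ∑ x ∈ Sup, μ x = 1) (x₀ : ℤ) :
    termProb μ Sup x₀ ≤ 1 :=
  ciSup_le fun n => probWithin_le_one hnn hsum n x₀

end

/-- `stoppedExpect μ Sup N g n y = 𝔼_y[g(X_{n ∧ τ})]`, where `τ` is the exit time of the walk
from the interval `(0, N)`. -/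
noncomputable def stoppedExpect (μ : ℤ → ℝ) (Sup : Finset ℤ) (N : ℤ) (g : ℤ → ℝ) : ℕ → ℤ → ℝ
  | 0, y => g y
  | n + 1, y => if 0 < y ∧ y < N then ∑ x ∈ Sup, μ x * stoppedExpect μ Sup N g n (y + x) else g y

namespace stoppedExpect

variable {μ : ℤ → ℝ} {Sup : Finset ℤ} {N : ℤ} {g h : ℤ → ℝ}

theorem of_not_inside {y : ℤ} (hy : ¬(0 < y ∧ y < N)) (n : ℕ) :
    stoppedExpect μ Sup N g n y = g y := by
  cases n <;> simp [stoppedExpect, hy]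

theorem succ_of_inside {y : ℤ} (hy : 0 < y ∧ y < N) (n : ℕ) :
    stoppedExpect μ Sup N g (n + 1) y = ∑ x ∈ Sup, μ x * stoppedExpect μ Sup N g n (y + x) :=
  if_pos hy

theorem add (n : ℕ) (y : ℤ) :
    stoppedExpect μ Sup N (fun z => g z + h z) n y =
      stoppedExpect μ Sup N g n y + stoppedExpect μ Sup N h n y := by
  induction n generalizing y with
  | zero => rfl
  | succ n ih =>
    by_cases hy : 0 < y ∧ y < N
    · simp only [succ_of_inside hy, ih, mul_add, sum_add_distrib]
    · simp only [of_not_inside hy]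

theorem const_mul (c : ℝ) (n : ℕ) (y : ℤ) :
    stoppedExpect μ Sup N (fun z => c * g z) n y = c * stoppedExpect μ Sup N g n y := by
  induction n generalizing y with
  | zero => rfl
  | succ n ih =>
    by_cases hy : 0 < y ∧ y < N
    · simp only [succ_of_inside hy, ih, mul_sum, mul_left_comm c]
    · simp only [of_not_inside hy]

theorem const (hsum : ∑ x ∈ Sup, μ x = 1) (c : ℝ) (n : ℕ) (y : ℤ) :
    stoppedExpect μ Sup N (fun _ => c) n y = c := by
  induction n generalizing y with
  | zero => rfl
  | succ n ih =>
    by_cases hy : 0 < y ∧ y < N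
    · simp only [succ_of_inside hy, ih, ← sum_mul, hsum, one_mul]
    · simp only [of_not_inside hy]

theorem intCast (hsum : ∑ x ∈ Sup, μ x = 1) (hE : ∑ x ∈ Sup, (x : ℝ) * μ x = 0) (n : ℕ) (y : ℤ) :
    stoppedExpect μ Sup N (fun z => (z : ℝ)) n y = y := by
  induction n generalizing y with
  | zero => rfl
  | succ n ih =>
    by_cases hy : 0 < y ∧ y < N
    · simp only [succ_of_inside hy, ih, Int.cast_add, sum_mul_add_eq_self hsum hE]
    · simp only [of_not_inside hy]

/-- Started at `y ≥ a`, the walk stays `≥ a` up to its exit from `(0, N)`, so `g` and `g'` need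
only be compared on `[a, ∞)`. -/
theorem mono_on (hnn : ∀ x, 0 ≤ μ x) {g' : ℤ → ℝ} {a : ℤ} (hstep : ∀ x ∈ Sup, a ≤ 1 + x)
    (hg : ∀ z, a ≤ z → g z ≤ g' z) (n : ℕ) {y : ℤ} (hy : a ≤ y) :
    stoppedExpect μ Sup N g n y ≤ stoppedExpect μ Sup N g' n y := by
  induction n generalizing y with
  | zero => exact hg y hy
  | succ n ih =>
    by_cases hin : 0 < y ∧ y < N
    · simp only [succ_of_inside hin]
      exact sum_le_sum fun x hx =>
        mul_le_mul_of_nonneg_left (ih (by linarith [hstep x hx, hin.1])) (hnn x)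
    · simpa only [of_not_inside hin] using hg y hy

theorem mono (hnn : ∀ x, 0 ≤ μ x) {g' : ℤ → ℝ} (hg : g ≤ g') (n : ℕ) (y : ℤ) :
    stoppedExpect μ Sup N g n y ≤ stoppedExpect μ Sup N g' n y := by
  obtain ⟨b, hb⟩ := Sup.bddBelow
  exact mono_on hnn (a := min (1 + b) y) (fun x hx => by have := hb hx; omega) (fun z _ => hg z) n
    (min_le_right _ _)

theorem nonneg (hnn : ∀ x, 0 ≤ μ x) (hsum : ∑ x ∈ Sup, μ x = 1) (hg : 0 ≤ g) (n : ℕ) (y : ℤ) :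
    0 ≤ stoppedExpect μ Sup N g n y :=
  (const hsum 0 n y).symm.le.trans (mono hnn hg n y)

theorem add_steps (k n : ℕ) (y : ℤ) :
    stoppedExpect μ Sup N g (k + n) y =
      stoppedExpect μ Sup N (stoppedExpect μ Sup N g n) k y := by
  induction k generalizing y with
  | zero => rw [zero_add]; rfl
  | succ k ih =>
    rw [Nat.add_right_comm]
    by_cases hy : 0 < y ∧ y < N
    · simp only [succ_of_inside hy, ih]
    · simp only [of_not_inside hy]

end stoppedExpect

section

variable {μ : ℤ → ℝ} {Sup : Finset ℤ}

theorem stoppedExpect_le_probWithin (hnn : ∀ x, 0 ≤ μ x) (N : ℤ) (n : ℕ) (y : ℤ) :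
    stoppedExpect μ Sup N (fun z => if z ≤ 0 then 1 else 0) n y ≤ probWithin μ Sup n y := by
  induction n generalizing y with
  | zero => exact le_rfl
  | succ n ih =>
    by_cases hin : 0 < y ∧ y < N
    · rw [stoppedExpect.succ_of_inside hin, probWithin_succ_of_pos hin.1]
      exact sum_le_sum fun x _ => mul_le_mul_of_nonneg_left (ih _) (hnn x)
    · rw [stoppedExpect.of_not_inside hin]
      split_ifs with hy
      · exact (probWithin_of_nonpos hy _).symm.le
      · exact probWithin_nonneg hnn _ _

theorem mul_stoppedExpect_high_le (hnn : ∀ x, 0 ≤ μ x) (hsum : ∑ x ∈ Sup, μ x = 1)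
    (hE : ∑ x ∈ Sup, (x : ℝ) * μ x = 0) {M : ℕ} (hM : ∀ x ∈ Sup, -(M : ℤ) ≤ x) (N : ℤ) (n : ℕ)
    {y : ℤ} (hy : 0 < y) :
    N * stoppedExpect μ Sup N (fun z => if N ≤ z then 1 else 0) n y ≤ y + M := by
  calc N * stoppedExpect μ Sup N (fun z => if N ≤ z then 1 else 0) n y
      = stoppedExpect μ Sup N (fun z => N * if N ≤ z then 1 else 0) n y :=
        (stoppedExpect.const_mul _ n y).symm
    _ ≤ stoppedExpect μ Sup N (fun z => z + M) n y := by
        refine stoppedExpect.mono_on hnn (a := 1 - M) (fun x hx => by linarith [hM x hx])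
          (fun z hz => ?_) n (by omega)
        split_ifs with hz'
        · have : (N : ℝ) ≤ z := by exact_mod_cast hz'
          simp only [mul_one]
          linarith [(M.cast_nonneg : (0 : ℝ) ≤ M)]
        · have : (1 - M : ℝ) ≤ z := by exact_mod_cast hz
          linarith
    _ = y + M := by
        rw [stoppedExpect.add, stoppedExpect.intCast hsum hE, stoppedExpect.const hsum]

theorem pow_le_stoppedExpect_outside (hnn : ∀ x, 0 ≤ μ x) (hsum : ∑ x ∈ Sup, μ x = 1)
    {N s : ℤ} (hs : s ∈ Sup) (k : ℕ) {y : ℤ} (hk : ¬(0 < y + k * s ∧ y + k * s < N)) :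
    μ s ^ k ≤ stoppedExpect μ Sup N (fun z => if 0 < z ∧ z < N then 0 else 1) k y := by
  induction k generalizing y with
  | zero =>
    simp only [Nat.cast_zero, zero_mul, add_zero] at hk
    simp [stoppedExpect, hk]
  | succ k ih =>
    by_cases hin : 0 < y ∧ y < N
    · rw [stoppedExpect.succ_of_inside hin, pow_succ']
      have hterm : ∀ x ∈ Sup, 0 ≤ μ x * stoppedExpect μ Sup N
          (fun z => if 0 < z ∧ z < N then 0 else 1) k (y + x) := fun x _ =>
        mul_nonneg (hnn x)
          (stoppedExpect.nonneg hnn hsum (fun z => by dsimp only; split_ifs <;> norm_num) k _)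
      refine le_trans ?_ (single_le_sum hterm hs)
      refine mul_le_mul_of_nonneg_left (ih ?_) (hnn s)
      push_cast at hk
      rwa [add_assoc, ← one_add_mul, add_comm 1]
    · rw [stoppedExpect.of_not_inside hin, if_neg hin]
      exact pow_le_one₀ (hnn s) (apply_le_one_of_mem hnn hsum hs)

theorem stoppedExpect_inside_le_pow (hnn : ∀ x, 0 ≤ μ x) (hsum : ∑ x ∈ Sup, μ x = 1)
    {N s : ℤ} (hs : s ∈ Sup) {K : ℕ}
    (hK : ∀ y, 0 < y ∧ y < N → ¬(0 < y + K * s ∧ y + K * s < N)) (m : ℕ) (y : ℤ) :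
    stoppedExpect μ Sup N (fun z => if 0 < z ∧ z < N then 1 else 0) (m * K) y ≤
      (1 - μ s ^ K) ^ m := by
  set inside : ℤ → ℝ := fun z => if 0 < z ∧ z < N then 1 else 0
  have hpow : 0 ≤ 1 - μ s ^ K :=
    sub_nonneg.2 (pow_le_one₀ (hnn s) (apply_le_one_of_mem hnn hsum hs))
  have hblock (y : ℤ) : stoppedExpect μ Sup N inside K y ≤ 1 - μ s ^ K := by
    by_cases hin : 0 < y ∧ y < N
    · have hsplit := stoppedExpect.add (μ := μ) (Sup := Sup) (N := N) (g := inside)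
        (h := fun z => if 0 < z ∧ z < N then 0 else 1) K y
      have hone : (fun z => inside z + if 0 < z ∧ z < N then 0 else 1) = fun _ => 1 := by
        funext z; simp only [inside]; split_ifs <;> norm_num
      rw [hone, stoppedExpect.const hsum] at hsplit
      linarith [pow_le_stoppedExpect_outside hnn hsum hs K (hK y hin)]
    · rw [stoppedExpect.of_not_inside hin]
      simpa only [inside, if_neg hin] using hpow
  induction m generalizing y with
  | zero => simp only [inside, zero_mul, pow_zero, stoppedExpect]; split_ifs <;> norm_num
  | succ m ih =>
    rw [Nat.succ_mul, add_comm, stoppedExpect.add_steps]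
    have hpointwise :
        stoppedExpect μ Sup N inside (m * K) ≤ fun z => (1 - μ s ^ K) ^ m * inside z := by
      intro z
      by_cases hin : 0 < z ∧ z < N
      · simpa [inside, hin] using ih z
      · simp [stoppedExpect.of_not_inside hin, inside, hin]
    calc stoppedExpect μ Sup N (stoppedExpect μ Sup N inside (m * K)) K y
        ≤ stoppedExpect μ Sup N (fun z => (1 - μ s ^ K) ^ m * inside z) K y :=
          stoppedExpect.mono hnn hpointwise K y
      _ = (1 - μ s ^ K) ^ m * stoppedExpect μ Sup N inside K y := stoppedExpect.const_mul _ K y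
      _ ≤ (1 - μ s ^ K) ^ m * (1 - μ s ^ K) :=
          mul_le_mul_of_nonneg_left (hblock y) (pow_nonneg hpow m)
      _ = (1 - μ s ^ K) ^ (m + 1) := (pow_succ _ _).symm

theorem not_inside_add_mul {s : ℤ} (hs : s ≠ 0) (K : ℕ) {y : ℤ} (hy : 0 < y ∧ y < K) :
    ¬(0 < y + K * s ∧ y + K * s < K) := by
  rintro ⟨h₁, h₂⟩
  rcases hs.lt_or_gt with hneg | hpos
  · nlinarith
  · nlinarith

theorem one_sub_div_le_termProb (hnn : ∀ x, 0 ≤ μ x) (hsum : ∑ x ∈ Sup, μ x = 1)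
    (hE : ∑ x ∈ Sup, (x : ℝ) * μ x = 0) {M : ℕ} (hM : ∀ x ∈ Sup, -(M : ℤ) ≤ x) {s : ℤ}
    (hs : s ∈ Sup) (hs₀ : s ≠ 0) (hμs : 0 < μ s) {K : ℕ} (hK : 0 < K) {x₀ : ℤ} (hx₀ : 0 < x₀) :
    1 - ((x₀ : ℝ) + M) / K ≤ termProb μ Sup x₀ := by
  have hbound (m : ℕ) : 1 - ((x₀ : ℝ) + M) / K - (1 - μ s ^ K) ^ m ≤ termProb μ Sup x₀ := by
    have hcover := stoppedExpect.mono (μ := μ) (Sup := Sup) (N := K) (g := fun _ => 1)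
      (g' := fun z => ((if z ≤ 0 then 1 else 0) + if (K : ℤ) ≤ z then 1 else 0) +
        if 0 < z ∧ z < K then 1 else 0)
      hnn (fun z => by dsimp only; split_ifs <;> first | omega | norm_num) (m * K) x₀
    rw [stoppedExpect.const hsum, stoppedExpect.add, stoppedExpect.add] at hcover
    have hlow := (stoppedExpect_le_probWithin hnn K (m * K) x₀).trans
      (probWithin_le_termProb hnn hsum _ x₀)
    have hhigh := mul_stoppedExpect_high_le hnn hsum hE hM K (m * K) hx₀
    have hinside := stoppedExpect_inside_le_pow hnn hsum hs
      (fun y hy => not_inside_add_mul hs₀ K hy) m x₀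
    rw [← le_div_iff₀' (by exact_mod_cast hK)] at hhigh
    push_cast at hhigh
    linarith
  have hpow : Tendsto (fun m => (1 - μ s ^ K) ^ m) atTop (𝓝 0) :=
    tendsto_pow_atTop_nhds_zero_of_lt_one
      (sub_nonneg.2 (pow_le_one₀ (hnn s) (apply_le_one_of_mem hnn hsum hs)))
      (sub_lt_self 1 (pow_pos hμs K))
  exact le_of_tendsto' (by simpa using hpow.const_sub (1 - ((x₀ : ℝ) + M) / K)) hbound

theorem termProb_eq_one (hnn : ∀ x, 0 ≤ μ x) (hsum : ∑ x ∈ Sup, μ x = 1) (h0 : μ 0 < 1)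
    (hE : ∑ x ∈ Sup, (x : ℝ) * μ x = 0) (x₀ : ℤ) : termProb μ Sup x₀ = 1 := by
  refine (termProb_le_one hnn hsum x₀).antisymm ?_
  rcases le_or_gt x₀ 0 with hx₀ | hx₀
  · exact (probWithin_of_nonpos hx₀ 0).symm.le.trans (probWithin_le_termProb hnn hsum 0 x₀)
  obtain ⟨s, hs, hs₀, hμs⟩ := exists_mem_ne_zero_pos hnn hsum h0
  obtain ⟨M, hM⟩ : ∃ M : ℕ, ∀ x ∈ Sup, -(M : ℤ) ≤ x :=
    ⟨Sup.sup Int.natAbs, fun x hx => by have := le_sup (f := Int.natAbs) hx; omega⟩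
  have hlim : Tendsto (fun K : ℕ => 1 - ((x₀ : ℝ) + M) / K) atTop (𝓝 (1 : ℝ)) := by
    simpa using (tendsto_const_div_atTop_nhds_zero_nat ((x₀ : ℝ) + M)).const_sub 1
  exact le_of_tendsto hlim (eventually_atTop.2 ⟨1, fun K hK =>
    one_sub_div_le_termProb hnn hsum hE hM hs hs₀ hμs hK hx₀⟩)

/-- Optional stopping for the martingale `Xₙ`, which is at most `y + M n` on `{T > n}` and `≤ 0`
on `{T ≤ n}`. -/
theorem le_mul_one_sub_probWithin (hnn : ∀ x, 0 ≤ μ x) (hsum : ∑ x ∈ Sup, μ x = 1)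
    (hE : ∑ x ∈ Sup, (x : ℝ) * μ x = 0) {M : ℤ} (hM : ∀ x ∈ Sup, x ≤ M) (n : ℕ) {y : ℤ}
    (hy : 0 < y) : (y : ℝ) ≤ (y + M * n) * (1 - probWithin μ Sup n y) := by
  induction n generalizing y with
  | zero => simp [probWithin, hy.not_ge]
  | succ n ih =>
    have step (x : ℤ) (hx : x ∈ Sup) :
        (y + x : ℝ) ≤ (y + M * (n + 1 : ℕ)) * (1 - probWithin μ Sup n (y + x)) := by
      rcases le_or_gt (y + x) 0 with hyx | hyx
      · rw [probWithin_of_nonpos hyx, sub_self, mul_zero]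
        exact_mod_cast hyx
      · have hxM : (x : ℝ) ≤ M := by exact_mod_cast hM x hx
        calc (y + x : ℝ) ≤ ((y + x : ℤ) + M * n) * (1 - probWithin μ Sup n (y + x)) := by
              exact_mod_cast ih hyx
          _ ≤ (y + M * (n + 1 : ℕ)) * (1 - probWithin μ Sup n (y + x)) := by
              refine mul_le_mul_of_nonneg_right ?_ (sub_nonneg.2 (probWithin_le_one hnn hsum _ _))
              push_cast
              linarith
    calc (y : ℝ) = ∑ x ∈ Sup, μ x * (y + x) := (sum_mul_add_eq_self hsum hE y).symm
      _ ≤ ∑ x ∈ Sup, μ x * ((y + M * (n + 1 : ℕ)) * (1 - probWithin μ Sup n (y + x))) :=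
          sum_le_sum fun x hx => mul_le_mul_of_nonneg_left (step x hx) (hnn x)
      _ = (y + M * (n + 1 : ℕ)) * (1 - probWithin μ Sup (n + 1) y) := by
          simp_rw [probWithin_succ_of_pos hy, mul_left_comm (μ _), ← mul_sum, mul_sub (μ _),
            mul_one, sum_sub_distrib, hsum]

theorem not_summable_one_sub_probWithin (hnn : ∀ x, 0 ≤ μ x) (hsum : ∑ x ∈ Sup, μ x = 1)
    (hE : ∑ x ∈ Sup, (x : ℝ) * μ x = 0) {x₀ : ℤ} (hx₀ : 0 < x₀) :
    ¬ Summable fun n => 1 - probWithin μ Sup n x₀ := by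
  intro hs
  set a := fun n => 1 - probWithin μ Sup n x₀
  obtain ⟨M, hM⟩ := Sup.bddAbove
  have ha : Antitone a := fun m n hmn => sub_le_sub_left (probWithin_mono hnn x₀ hmn) 1
  have hlim : Tendsto (fun n : ℕ => x₀ * a (2 * n) + 2 * M * (n * a (2 * n))) atTop (𝓝 0) := by
    have h := hs.tendsto_atTop_zero.comp (tendsto_id.const_mul_atTop' two_pos)
    simpa using (h.const_mul (x₀ : ℝ)).add ((ha.tendsto_mul_apply_two_mul hs).const_mul (2 * M : ℝ))
  have hwald (n : ℕ) : (x₀ : ℝ) ≤ x₀ * a (2 * n) + 2 * M * (n * a (2 * n)) := by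
    have := le_mul_one_sub_probWithin hnn hsum hE (fun x hx => hM hx) (2 * n) hx₀
    push_cast at this
    linarith
  have : (x₀ : ℝ) ≤ 0 := ge_of_tendsto' hlim hwald
  have : (0 : ℝ) < x₀ := by exact_mod_cast hx₀
  linarith

end

theorem symmetric_walk_ast_not_past_general (μ : ℤ → ℝ) (Sup : Finset ℤ)
    (hnn : ∀ x : ℤ, 0 ≤ μ x)
    (hsum : ∑ x ∈ Sup, μ x = 1) (h0 : μ 0 < 1)
    (hE : ∑ x ∈ Sup, (x : ℝ) * μ x = 0) :
    (∀ x₀ : ℤ, termProb μ Sup x₀ = 1) ∧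
    (∀ x₀ : ℤ, 1 ≤ x₀ → ¬ Summable (fun n : ℕ => 1 - probWithin μ Sup n x₀)) :=
  ⟨termProb_eq_one hnn hsum h0 hE, fun _ hx₀ => not_summable_one_sub_probWithin hnn hsum hE hx₀⟩

/-- If `μ 0 < 1` and the expected increment is `0`, then the walk reaches a value `≤ 0`
with probability `1` from every start, but the expected number of steps until
absorption (which equals `∑ₙ P(T > n) = ∑ₙ (1 - probWithin μ Sup n x₀)`) is infinite
for every start `x₀ ≥ 1`. -/
theorem symmetric_walk_ast_not_past (μ : ℤ → ℝ) (Sup : Finset ℤ)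
    (hnn : ∀ x : ℤ, 0 ≤ μ x) (hsupp : ∀ x ∉ Sup, μ x = 0)
    (hsum : ∑ x ∈ Sup, μ x = 1) (h0 : μ 0 < 1)
    (hE : ∑ x ∈ Sup, (x : ℝ) * μ x = 0) :
    (∀ x₀ : ℤ, termProb μ Sup x₀ = 1) ∧
    (∀ x₀ : ℤ, 1 ≤ x₀ → ¬ Summable (fun n : ℕ => 1 - probWithin μ Sup n x₀)) :=
  symmetric_walk_ast_not_past_general μ Sup hnn hsum h0 hE
end

section
/- If there exists an embedding from a rewrite sequence tree T₁ into a rewrite sequence tree T₂, then the expected derivation length of T₁ is at most that of T₂: edl(T₁) ≤ edl(T₂). -/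
/-!
Write `L d` for the total probability of the nodes at depth `d` and `a d` for that of the leaves
at depth `d`. The children of an inner node share its probability, so `L (d + 1) + a d = L d` and
`L 0 = 1`. If `|T| = ∑ a < 1`, every `L d` is at least `1 - |T| > 0` and `∑ L = ∞`; otherwise
`L d = ∑_{e ≥ d} a e` and `∑ L = ∑ (e + 1) a e = edl T + 1`. So in both cases the total probability
of all nodes is `edl T + 1`, and an embedding, injective on nodes and preserving probabilities, can
only increase it.
-/

open scoped ENNReal

/-- Nodes of a finitely-branching tree given by a branching function `nc`:
the node `v` (a position, i.e. list of child indices) is a node iff it is the root `[]`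
or `v = w ++ [i]` for a node `w` with `i < nc w`. -/
inductive IsNodeOf (nc : List ℕ → ℕ) : List ℕ → Prop
  | root : IsNodeOf nc []
  | child {v : List ℕ} {i : ℕ} : IsNodeOf nc v → i < nc v → IsNodeOf nc (v ++ [i])

/-- A (possibly infinite) rewrite sequence tree: every node `v` carries a probability
`prob v ∈ (0,1]` and an object `label v`; the root has probability `1`, and for every
inner node the probabilities of its children sum up to the probability of the node. -/
structure RST (A : Type) where
  nc : List ℕ → ℕ
  prob : List ℕ → ℝ≥0∞
  label : List ℕ → A
  prob_root : prob [] = 1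
  prob_pos : ∀ v, IsNodeOf nc v → 0 < prob v
  prob_le_one : ∀ v, IsNodeOf nc v → prob v ≤ 1
  prob_sum : ∀ v, IsNodeOf nc v → 0 < nc v →
      ∑ i ∈ Finset.range (nc v), prob (v ++ [i]) = prob v

namespace RST
variable {A : Type}

def IsNode (T : RST A) (v : List ℕ) : Prop := IsNodeOf T.nc v

def IsLeaf (T : RST A) (v : List ℕ) : Prop := T.IsNode v ∧ T.nc v = 0

/-- The termination probability `|T|`: the sum of the probabilities of all leaves. -/
noncomputable def termProb (T : RST A) : ℝ≥0∞ :=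
  ∑' v : {v : List ℕ // T.IsLeaf v}, T.prob v

/-- The expected derivation length `edl(T)`: `∞` if `|T| < 1`, and otherwise the sum
over all leaves `v` of `depth(v) · prob v` (the depth of a node is its list length). -/
noncomputable def edl (T : RST A) : ℝ≥0∞ :=
  if T.termProb < 1 then ⊤
  else ∑' v : {v : List ℕ // T.IsLeaf v}, (v.1.length : ℝ≥0∞) * T.prob v

end RST

/-- An embedding between rewrite sequence trees: an injective map on nodes that
preserves probabilities and paths (the ancestor relation, i.e. the prefix order). -/
structure RSTEmbedding {A B : Type} (T₁ : RST A) (T₂ : RST B) where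
  toFun : List ℕ → List ℕ
  node : ∀ v, T₁.IsNode v → T₂.IsNode (toFun v)
  inj : ∀ v w, T₁.IsNode v → T₁.IsNode w → toFun v = toFun w → v = w
  prob_eq : ∀ v, T₁.IsNode v → T₂.prob (toFun v) = T₁.prob v
  path : ∀ v w, T₁.IsNode v → T₁.IsNode w → v <+: w → toFun v <+: toFun w

namespace ENNReal

theorem tsum_tsum_nat_add_eq_tsum_succ_mul (a : ℕ → ℝ≥0∞) :
    ∑' d, ∑' e, a (e + d) = ∑' n, (n + 1) * a n := by
  have tail (d : ℕ) : ∑' e, a (e + d) = ∑' n, if d ≤ n then a n else 0 := by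
    rw [← ENNReal.summable.sum_add_tsum_nat_add' (f := fun n => if d ≤ n then a n else 0)
      (k := d)]
    simp +contextual [Finset.sum_eq_zero]
  have weight (n : ℕ) : ∑' d, (if d ≤ n then a n else 0) = (n + 1) * a n := by
    rw [tsum_eq_sum (s := Finset.range (n + 1)) (by simp +contextual)]
    simp +contextual [Finset.sum_ite_of_true]
  rw [tsum_congr tail, ENNReal.tsum_comm, tsum_congr weight]

variable {L a : ℕ → ℝ≥0∞}

theorem add_sum_range_eq_of_succ_add (hstep : ∀ d, L (d + 1) + a d = L d) (d : ℕ) :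
    L d + ∑ e ∈ Finset.range d, a e = L 0 := by
  induction d with
  | zero => simp
  | succ d ih => rw [Finset.sum_range_succ, ← ih, ← hstep d, add_assoc, add_comm (a d)]

theorem tsum_le_of_succ_add (hstep : ∀ d, L (d + 1) + a d = L d) : ∑' d, a d ≤ L 0 :=
  tsum_le_of_sum_range_le fun d =>
    le_add_self.trans (add_sum_range_eq_of_succ_add hstep d).le

theorem tsum_eq_top_of_succ_add_of_tsum_lt (hstep : ∀ d, L (d + 1) + a d = L d)
    (h : ∑' d, a d < L 0) : ∑' d, L d = ⊤ := by
  have gap (d : ℕ) : L 0 - ∑' e, a e ≤ L d := by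
    rw [tsub_le_iff_right, ← add_sum_range_eq_of_succ_add hstep d]
    gcongr
    exact ENNReal.sum_le_tsum _
  refine top_le_iff.1 ?_
  calc ⊤ = ∑' _ : ℕ, (L 0 - ∑' e, a e) :=
        (tsum_const_eq_top_of_ne_zero (tsub_pos_of_lt h).ne').symm
    _ ≤ ∑' d, L d := ENNReal.tsum_le_tsum gap

theorem eq_tsum_nat_add_of_succ_add (hstep : ∀ d, L (d + 1) + a d = L d) (hL : L 0 ≠ ⊤)
    (h : ∑' d, a d = L 0) (d : ℕ) : L d = ∑' e, a (e + d) := by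
  have hfin : ∑ e ∈ Finset.range d, a e ≠ ⊤ :=
    ne_top_of_le_ne_top hL (le_add_self.trans (add_sum_range_eq_of_succ_add hstep d).le)
  refine (add_right_inj hfin).1 ?_
  rw [add_comm, add_sum_range_eq_of_succ_add hstep, ENNReal.summable.sum_add_tsum_nat_add', h]

theorem tsum_eq_ite_add_of_succ_add (hstep : ∀ d, L (d + 1) + a d = L d) (hL : L 0 ≠ ⊤) :
    ∑' d, L d = (if ∑' d, a d < L 0 then ⊤ else ∑' d, d * a d) + L 0 := by
  split_ifs with h
  · rw [tsum_eq_top_of_succ_add_of_tsum_lt hstep h, top_add]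
  · have htot : ∑' d, a d = L 0 := le_antisymm (tsum_le_of_succ_add hstep) (not_lt.1 h)
    calc ∑' d, L d = ∑' d, ∑' e, a (e + d) :=
          tsum_congr (eq_tsum_nat_add_of_succ_add hstep hL htot)
      _ = ∑' d, (d + 1) * a d := tsum_tsum_nat_add_eq_tsum_succ_mul a
      _ = ∑' d, d * a d + L 0 := by simp_rw [add_mul, one_mul, ENNReal.tsum_add, htot]

end ENNReal

namespace RST
variable {A : Type} (T : RST A)

noncomputable def level : ℕ → Finset (List ℕ)
  | 0 => {[]}
  | d + 1 => ((level d).sigma fun w => Finset.range (T.nc w)).image fun p => p.1 ++ [p.2]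

theorem mem_level {d : ℕ} {v : List ℕ} : v ∈ T.level d ↔ T.IsNode v ∧ v.length = d := by
  induction d generalizing v with
  | zero =>
    simp only [level, Finset.mem_singleton, List.length_eq_zero_iff, iff_and_self]
    rintro rfl
    exact IsNodeOf.root
  | succ d ih =>
    simp only [level, Finset.mem_image, Finset.mem_sigma, Finset.mem_range, ih, Sigma.exists]
    constructor
    · rintro ⟨w, i, ⟨⟨hw, rfl⟩, hi⟩, rfl⟩
      exact ⟨IsNodeOf.child hw hi, by simp⟩
    · rintro ⟨hv, hlen⟩
      cases hv with
      | root => simp at hlen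
      | @child w i hw hi => exact ⟨w, i, ⟨⟨hw, by simpa using hlen⟩, hi⟩, rfl⟩

theorem sum_level_succ (g : List ℕ → ℝ≥0∞) (d : ℕ) :
    ∑ v ∈ T.level (d + 1), g v =
      ∑ w ∈ T.level d, ∑ i ∈ Finset.range (T.nc w), g (w ++ [i]) := by
  rw [level, Finset.sum_image, Finset.sum_sigma]
  rintro ⟨w, i⟩ - ⟨w', i'⟩ - h
  obtain ⟨rfl, hi⟩ := List.append_inj' h rfl
  cases hi
  rfl

noncomputable def levelMass (d : ℕ) : ℝ≥0∞ := ∑ v ∈ T.level d, T.prob v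

noncomputable def leafMass (d : ℕ) : ℝ≥0∞ := ∑ v ∈ (T.level d).filter (T.nc · = 0), T.prob v

theorem levelMass_zero : T.levelMass 0 = 1 := by simp [levelMass, level, T.prob_root]

theorem levelMass_succ_add_leafMass (d : ℕ) :
    T.levelMass (d + 1) + T.leafMass d = T.levelMass d := by
  rw [levelMass, sum_level_succ, leafMass, Finset.sum_filter, ← Finset.sum_add_distrib,
    levelMass]
  refine Finset.sum_congr rfl fun w hw => ?_
  rcases Nat.eq_zero_or_pos (T.nc w) with h | h
  · simp [h]
  · rw [if_neg h.ne', add_zero, T.prob_sum w (T.mem_level.1 hw).1 h]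

theorem tsum_subtype_eq_tsum_sum_level {P : List ℕ → Prop} [DecidablePred P]
    (hP : ∀ v, P v → T.IsNode v) (g : List ℕ → ℝ≥0∞) :
    ∑' v : {v // P v}, g v = ∑' d, ∑ v ∈ (T.level d).filter P, g v := by
  rw [← ENNReal.tsum_fiberwise _ fun v : {v // P v} => v.1.length]
  refine tsum_congr fun d => ?_
  rw [← Finset.tsum_subtype]
  let e : (fun v : {v // P v} => v.1.length) ⁻¹' {d} ≃ (T.level d).filter P :=
    { toFun := fun v =>
        ⟨v.1.1, Finset.mem_filter.2 ⟨T.mem_level.2 ⟨hP _ v.1.2, v.2⟩, v.1.2⟩⟩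
      invFun := fun v => ⟨⟨v.1, (Finset.mem_filter.1 v.2).2⟩,
        (T.mem_level.1 (Finset.mem_filter.1 v.2).1).2⟩
      left_inv := fun _ => rfl
      right_inv := fun _ => rfl }
  exact e.tsum_eq (fun v => g v.1)

theorem tsum_levelMass : ∑' d, T.levelMass d = ∑' v : {v // T.IsNode v}, T.prob v := by
  classical
  rw [T.tsum_subtype_eq_tsum_sum_level (fun _ => id)]
  refine tsum_congr fun d => ?_
  rw [levelMass, Finset.filter_true_of_mem fun v hv => (T.mem_level.1 hv).1]

theorem sum_level_filter_isLeaf [DecidablePred T.IsLeaf] (g : List ℕ → ℝ≥0∞) (d : ℕ) :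
    ∑ v ∈ (T.level d).filter T.IsLeaf, g v = ∑ v ∈ (T.level d).filter (T.nc · = 0), g v := by
  congr 1
  exact Finset.filter_congr fun v hv => by simp [IsLeaf, (T.mem_level.1 hv).1]

theorem tsum_leafMass : ∑' d, T.leafMass d = T.termProb := by
  classical
  rw [termProb, T.tsum_subtype_eq_tsum_sum_level fun _ h => h.1]
  simp only [sum_level_filter_isLeaf, leafMass]

theorem tsum_depth_mul_leafMass :
    ∑' d : ℕ, (d : ℝ≥0∞) * T.leafMass d =
      ∑' v : {v // T.IsLeaf v}, (v.1.length : ℝ≥0∞) * T.prob v := by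
  classical
  rw [T.tsum_subtype_eq_tsum_sum_level (fun _ h => h.1) fun v => (v.length : ℝ≥0∞) * T.prob v]
  refine tsum_congr fun d => ?_
  rw [sum_level_filter_isLeaf, leafMass, Finset.mul_sum]
  refine Finset.sum_congr rfl fun v hv => ?_
  rw [(T.mem_level.1 (Finset.mem_filter.1 hv).1).2]

theorem edl_add_one : T.edl + 1 = ∑' v : {v // T.IsNode v}, T.prob v := by
  have h := ENNReal.tsum_eq_ite_add_of_succ_add T.levelMass_succ_add_leafMass
    (by simp [levelMass_zero])
  rw [T.levelMass_zero, T.tsum_levelMass, T.tsum_leafMass, T.tsum_depth_mul_leafMass] at h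
  rw [h, edl]

end RST

theorem RSTEmbedding.tsum_prob_le {A B : Type} {T₁ : RST A} {T₂ : RST B}
    (f : RSTEmbedding T₁ T₂) :
    ∑' v : {v // T₁.IsNode v}, T₁.prob v ≤ ∑' v : {v // T₂.IsNode v}, T₂.prob v := by
  let φ : {v // T₁.IsNode v} → {v // T₂.IsNode v} := fun v => ⟨f.toFun v, f.node v v.2⟩
  have hφ : Function.Injective φ := fun v w h =>
    Subtype.ext (f.inj v w v.2 w.2 (congrArg Subtype.val h))
  calc ∑' v : {v // T₁.IsNode v}, T₁.prob v = ∑' v, T₂.prob (φ v) :=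
        tsum_congr fun v => (f.prob_eq v v.2).symm
    _ ≤ _ := ENNReal.tsum_comp_le_tsum_of_injective hφ fun w => T₂.prob w

/-- If there is an embedding from `T₁` into `T₂`, then `edl(T₁) ≤ edl(T₂)`. -/
theorem edl_le_of_embedding {A B : Type} (T₁ : RST A) (T₂ : RST B)
    (h : Nonempty (RSTEmbedding T₁ T₂)) : T₁.edl ≤ T₂.edl := by
  obtain ⟨f⟩ := h
  rw [← ENNReal.add_le_add_iff_right ENNReal.one_ne_top, T₁.edl_add_one, T₂.edl_add_one]
  exact f.tsum_prob_le
end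

section
/- In a rewrite sequence tree, for every node w, the sum of the probabilities of the leaves that are descendants of w (including w itself if it is a leaf) is at most p_w; moreover if the termination probability of the whole tree equals 1, this sum equals p_w for every node w. -/
open scoped ENNReal

/-!
The leaves below a node `w` with children are the disjoint union of the leaves below its
children, so leaf masses add up along `prob_sum`. Cutting off the leaves deeper than `k`, an
induction on the remaining depth `k - |w|` bounds the truncated mass below `w` by `p_w`; every
finite set of leaves lies above some depth, which gives the inequality. If `|T| = 1`, equality
holds at the root and passes from a node to its children: their masses are each at most their
probabilities and add up to the finite `p_w`, so none can fall short.
-/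

theorem ENNReal.eq_of_sum_le_sum_of_le {ι : Type*} {s : Finset ι} {f g : ι → ℝ≥0∞}
    (hle : ∀ i ∈ s, f i ≤ g i) (hsum : ∑ i ∈ s, g i ≤ ∑ i ∈ s, f i)
    (hfin : ∑ i ∈ s, f i ≠ ∞) : ∀ i ∈ s, f i = g i := by
  have hsplit : ∑ i ∈ s, g i = ∑ i ∈ s, f i + ∑ i ∈ s, (g i - f i) := by
    rw [← Finset.sum_add_distrib]
    exact Finset.sum_congr rfl fun i hi => (add_tsub_cancel_of_le (hle i hi)).symm
  have hgap : ∑ i ∈ s, (g i - f i) = 0 := by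
    rw [hsplit] at hsum
    exact nonpos_iff_eq_zero.mp ((ENNReal.add_le_add_iff_left hfin).mp (by simpa using hsum))
  intro i hi
  exact le_antisymm (hle i hi) (tsub_eq_zero_iff_le.mp ((Finset.sum_eq_zero_iff.mp hgap) i hi))

theorem List.eq_of_concat_prefix_of_concat_prefix {α : Type*} {w v : List α} {a b : α}
    (ha : w ++ [a] <+: v) (hb : w ++ [b] <+: v) : a = b := by
  have h := (List.prefix_of_prefix_length_le ha hb (by simp)).eq_of_length (by simp)
  simpa using h

namespace IsNodeOf
variable {nc : List ℕ → ℕ} {v w : List ℕ}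

theorem exists_child_prefix (hv : IsNodeOf nc v) (h : w <+: v) (hne : w ≠ v) :
    ∃ i < nc w, w ++ [i] <+: v := by
  induction hv with
  | root => exact absurd (List.prefix_nil.mp h) hne
  | @child u j hu hj ih =>
    rcases List.prefix_concat_iff.mp h with rfl | h'
    · exact absurd rfl hne
    · rcases eq_or_ne w u with rfl | hne'
      · exact ⟨j, hj, List.prefix_refl _⟩
      · obtain ⟨i, hi, hp⟩ := ih h' hne'
        exact ⟨i, hi, hp.trans (List.prefix_append _ _)⟩

end IsNodeOf

namespace RST
variable {A : Type} (T : RST A) {w : List ℕ}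

def leavesBelow (w : List ℕ) : Set (List ℕ) := {v | T.IsLeaf v ∧ w <+: v}

theorem leavesBelow_of_isLeaf (hw : T.IsLeaf w) : T.leavesBelow w = {w} := by
  ext v
  refine ⟨fun ⟨hv, hwv⟩ => ?_, fun hv => ⟨hv ▸ hw, hv ▸ List.prefix_refl w⟩⟩
  by_contra hne
  obtain ⟨i, hi, -⟩ := hv.1.exists_child_prefix hwv (Ne.symm hne)
  exact absurd hw.2 (Nat.ne_zero_of_lt hi)

theorem leavesBelow_eq_biUnion (hw : 0 < T.nc w) :
    T.leavesBelow w = ⋃ i ∈ (Finset.range (T.nc w) : Set ℕ), T.leavesBelow (w ++ [i]) := by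
  ext v
  simp only [Set.mem_iUnion, Finset.coe_range, Set.mem_Iio, exists_prop]
  constructor
  · intro hv
    have hne : w ≠ v := by
      rintro rfl
      exact hw.ne' hv.1.2
    obtain ⟨i, hi, hwi⟩ := hv.1.1.exists_child_prefix hv.2 hne
    exact ⟨i, hi, hv.1, hwi⟩
  · rintro ⟨i, -, hv, hwi⟩
    exact ⟨hv, (List.prefix_append w [i]).trans hwi⟩

theorem pairwiseDisjoint_leavesBelow_child (S : Set ℕ) :
    S.PairwiseDisjoint fun i => T.leavesBelow (w ++ [i]) :=
  fun _ _ _ _ hij => Set.disjoint_left.mpr fun _ hi hj =>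
    hij (List.eq_of_concat_prefix_of_concat_prefix hi.2 hj.2)

theorem tsum_leavesBelow_eq_sum_children (f : List ℕ → ℝ≥0∞) (hw : 0 < T.nc w) :
    ∑' v : T.leavesBelow w, f v
      = ∑ i ∈ Finset.range (T.nc w), ∑' v : T.leavesBelow (w ++ [i]), f v := by
  rw [tsum_congr_set_coe f (T.leavesBelow_eq_biUnion hw),
    ENNReal.tsum_biUnion' (T.pairwiseDisjoint_leavesBelow_child _)]
  exact Finset.tsum_subtype (Finset.range (T.nc w)) fun i => ∑' v : T.leavesBelow (w ++ [i]), f v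

theorem tsum_leavesBelow_indicator_le (k n : ℕ) (hw : T.IsNode w) (hk : k < w.length + n) :
    ∑' v : T.leavesBelow w, {u : List ℕ | u.length ≤ k}.indicator T.prob v ≤ T.prob w := by
  induction n generalizing w with
  | zero =>
    refine (ENNReal.tsum_eq_zero.mpr fun v => Set.indicator_of_notMem ?_ _).trans_le zero_le
    have := v.2.2.length_le
    show ¬ v.1.length ≤ k
    omega
  | succ n ih =>
    rcases Nat.eq_zero_or_pos (T.nc w) with hleaf | hw0
    · rw [tsum_congr_set_coe _ (T.leavesBelow_of_isLeaf ⟨hw, hleaf⟩), tsum_singleton]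
      exact Set.indicator_le_self _ _ w
    rw [T.tsum_leavesBelow_eq_sum_children _ hw0, ← T.prob_sum w hw hw0]
    refine Finset.sum_le_sum fun i hi => ih (hw.child (Finset.mem_range.mp hi)) ?_
    simp only [List.length_append, List.length_singleton]
    omega

theorem tsum_leavesBelow_prob_le (hw : T.IsNode w) :
    ∑' v : T.leavesBelow w, T.prob v ≤ T.prob w := by
  refine ENNReal.tsum_eq_iSup_sum.trans_le (iSup_le fun s => ?_)
  set k := s.sup fun v => v.1.length
  calc ∑ v ∈ s, T.prob v
      = ∑ v ∈ s, {u : List ℕ | u.length ≤ k}.indicator T.prob v :=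
        Finset.sum_congr rfl fun v hv =>
          (Set.indicator_of_mem (s := {u : List ℕ | u.length ≤ k})
            (Finset.le_sup (f := fun v => v.1.length) hv) T.prob).symm
    _ ≤ ∑' v : T.leavesBelow w, {u : List ℕ | u.length ≤ k}.indicator T.prob v :=
        ENNReal.sum_le_tsum s
    _ ≤ T.prob w := T.tsum_leavesBelow_indicator_le k (k + 1) hw (by omega)

theorem tsum_leavesBelow_prob_eq (hT : T.termProb = 1) (hw : T.IsNode w) :
    ∑' v : T.leavesBelow w, T.prob v = T.prob w := by
  induction hw with
  | root =>
    rw [T.prob_root, ← hT, termProb]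
    exact tsum_congr_set_coe T.prob (t := {v | T.IsLeaf v}) (by ext v; simp [leavesBelow])
  | @child u j hu hj ih =>
    have hu0 : 0 < T.nc u := by omega
    have hsplit := T.tsum_leavesBelow_eq_sum_children T.prob hu0
    refine ENNReal.eq_of_sum_le_sum_of_le
      (fun i hi => T.tsum_leavesBelow_prob_le (hu.child (Finset.mem_range.mp hi)))
      ?_ ?_ j (Finset.mem_range.mpr hj)
    · rw [← hsplit, ih, T.prob_sum u hu hu0]
    · rw [← hsplit, ih]
      exact ne_top_of_le_ne_top ENNReal.one_ne_top (T.prob_le_one u hu)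

end RST

/-- For every node `w` of a rewrite sequence tree, the sum of the probabilities of the
leaves that are descendants of `w` (including `w` itself if it is a leaf) is at most
`prob w`; moreover, if the termination probability of the whole tree is `1`, then this
sum equals `prob w` for every node `w`. -/
theorem leaf_sum_below_node {A : Type} (T : RST A) :
    (∀ w, T.IsNode w →
      ∑' v : {v : List ℕ // T.IsLeaf v ∧ w <+: v}, T.prob v ≤ T.prob w) ∧
    (T.termProb = 1 → ∀ w, T.IsNode w →
      ∑' v : {v : List ℕ // T.IsLeaf v ∧ w <+: v}, T.prob v = T.prob w) :=
  ⟨fun _ hw => T.tsum_leavesBelow_prob_le hw, fun hT _ hw => T.tsum_leavesBelow_prob_eq hT hw⟩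
end

section
/- Define maxOO(t,s) as the maximal cardinality of a set of pairwise orthogonal positions of s at which t matches. Then for s = f(s₁,...,s_k): maxOO(t,s) = max(Σ_{j=1}^{k} maxOO(t,s_j), 1) if t matches s at the root position, and maxOO(t,s) = Σ_{j=1}^{k} maxOO(t,s_j) otherwise; and for s a variable or constant, maxOO(t,s) = 1 if t matches s and 0 otherwise. -/
namespace Tm
variable {S V : Type}

/-- The subterm of `t` at position `π`, if `π` is a position of `t`. -/
def subtermAt : Tm S V → List ℕ → Option (Tm S V)
  | t, [] => some t
  | var _, _ :: _ => none
  | app _ [], _ :: _ => none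
  | app _ (u :: _), 0 :: π => subtermAt u π
  | app f (_ :: ts), (i + 1) :: π => subtermAt (app f ts) (i :: π)

/-- `t` matches `s` at position `π`. -/
def Matches (t s : Tm S V) (π : List ℕ) : Prop :=
  ∃ σ : V → Tm S V, subtermAt s π = some (subst σ t)


/-- Two positions are orthogonal if neither is a prefix of the other. -/
def Orthogonal (π₁ π₂ : List ℕ) : Prop := ¬ π₁ <+: π₂ ∧ ¬ π₂ <+: π₁

/-- The maximal cardinality of a set of pairwise orthogonal positions of `s` at which
`t` matches. -/
noncomputable def maxOO (t s : Tm S V) : ℕ :=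
  sSup {n | ∃ Sset : Finset (List ℕ),
    (∀ π ∈ Sset, Matches t s π) ∧
    (∀ π₁ ∈ Sset, ∀ π₂ ∈ Sset, π₁ ≠ π₂ → Orthogonal π₁ π₂) ∧
    Sset.card = n}

end Tm

/-!
A set of pairwise orthogonal positions containing the root `[]` is `{[]}`. One avoiding the
root splits along the first index into sets of pairwise orthogonal positions of the arguments
`sⱼ`, and conversely such sets for the arguments, prefixed by `j`, combine into one for `s`.
Since `maxOO` is an `sSup` in `ℕ`, which is junk for unbounded sets, the induction on `s`
proves that the supremum is attained, i.e. `IsGreatest`, and the recursion is read off from it.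
-/

theorem Finset.card_le_sum_card_preimage_cons {α : Type*} [DecidableEq α]
    {P : Finset (List α)} {J : Finset α} (hP : ∀ π ∈ P, ∃ j ∈ J, ∃ τ, π = j :: τ) :
    P.card ≤ ∑ j ∈ J, (P.preimage (List.cons j) List.cons_injective.injOn).card := by
  calc P.card
      ≤ (J.biUnion fun j => (P.preimage (List.cons j) List.cons_injective.injOn).image
          (List.cons j)).card := by
        refine Finset.card_le_card fun π hπ => ?_
        obtain ⟨j, hj, τ, rfl⟩ := hP π hπ
        exact Finset.mem_biUnion.2
          ⟨j, hj, Finset.mem_image.2 ⟨τ, Finset.mem_preimage.2 hπ, rfl⟩⟩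
    _ ≤ ∑ j ∈ J, ((P.preimage (List.cons j) _).image (List.cons j)).card :=
        Finset.card_biUnion_le
    _ ≤ _ := Finset.sum_le_sum fun _ _ => Finset.card_image_le

namespace Tm

variable {S V : Type}

theorem subtermAt_app_cons (f : S) :
    ∀ (ss : List (Tm S V)) (j : ℕ) (π : List ℕ),
      subtermAt (app f ss) (j :: π) = ss[j]?.bind (subtermAt · π)
  | [], j, π => by cases j <;> simp [subtermAt]
  | _ :: _, 0, _ => by simp [subtermAt]
  | _ :: ts, j + 1, π => by rw [subtermAt, subtermAt_app_cons f ts j π]; rfl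

theorem Matches.eq_nil_of_var {t : Tm S V} {x : V} {π : List ℕ}
    (h : Matches t (var x) π) : π = [] := by
  obtain ⟨σ, hσ⟩ := h
  cases π with
  | nil => rfl
  | cons j π => simp [subtermAt] at hσ

theorem matches_app_cons_iff {t : Tm S V} {f : S} {ss : List (Tm S V)} {j : ℕ}
    {π : List ℕ} : Matches t (app f ss) (j :: π) ↔ ∃ h : j < ss.length, Matches t ss[j] π := by
  simp only [Matches, subtermAt_app_cons]
  rcases lt_or_ge j ss.length with h | h
  · simp [h]
  · simp [not_lt.2 h]

theorem not_orthogonal_nil_left (π : List ℕ) : ¬ Orthogonal [] π :=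
  fun h => h.1 π.nil_prefix

theorem orthogonal_cons_cons_iff {i j : ℕ} {π₁ π₂ : List ℕ} :
    Orthogonal (i :: π₁) (j :: π₂) ↔ i ≠ j ∨ Orthogonal π₁ π₂ := by
  simp only [Orthogonal, List.cons_prefix_cons]
  grind

def IsOrthogonalMatchSet (t s : Tm S V) (P : Finset (List ℕ)) : Prop :=
  (∀ π ∈ P, Matches t s π) ∧ (P : Set (List ℕ)).Pairwise Orthogonal

def matchCounts (t s : Tm S V) : Set ℕ :=
  Finset.card '' {P | IsOrthogonalMatchSet t s P}

theorem maxOO_eq_sSup_matchCounts (t s : Tm S V) : maxOO t s = sSup (matchCounts t s) := by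
  simp only [maxOO, matchCounts, IsOrthogonalMatchSet, Set.image, Set.mem_ofPred_eq, and_assoc]
  rfl

theorem maxOO_eq_of_isGreatest {t s : Tm S V} {m : ℕ} (h : IsGreatest (matchCounts t s) m) :
    maxOO t s = m := by
  rw [maxOO_eq_sSup_matchCounts, h.csSup_eq]

section IsOrthogonalMatchSet

variable {t s : Tm S V}

theorem isOrthogonalMatchSet_empty : IsOrthogonalMatchSet t s ∅ :=
  ⟨by simp, by simp⟩

theorem isOrthogonalMatchSet_singleton {π : List ℕ} (h : Matches t s π) :
    IsOrthogonalMatchSet t s {π} :=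
  ⟨by simpa using h, by simp⟩

theorem IsOrthogonalMatchSet.card_le_one_of_nil_mem {P : Finset (List ℕ)}
    (hP : IsOrthogonalMatchSet t s P) (hnil : [] ∈ P) : P.card ≤ 1 := by
  have eq_nil : ∀ π ∈ P, π = [] := fun π hπ =>
    by_contra fun hne => not_orthogonal_nil_left π (hP.2 hnil hπ (Ne.symm hne))
  exact Finset.card_le_one.2 fun a ha b hb => (eq_nil a ha).trans (eq_nil b hb).symm

theorem IsOrthogonalMatchSet.preimage_cons {f : S} {ss : List (Tm S V)} {P : Finset (List ℕ)}
    (hP : IsOrthogonalMatchSet t (app f ss) P) (j : Fin ss.length) :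
    IsOrthogonalMatchSet t ss[j] (P.preimage (List.cons ↑j) List.cons_injective.injOn) := by
  refine ⟨fun τ hτ => ?_, fun τ₁ h₁ τ₂ h₂ hne => ?_⟩
  · obtain ⟨_, h⟩ := matches_app_cons_iff.1 (hP.1 _ (Finset.mem_preimage.1 hτ))
    exact h
  · have := hP.2 (Finset.mem_preimage.1 h₁) (Finset.mem_preimage.1 h₂) (by simpa using hne)
    exact (orthogonal_cons_cons_iff.1 this).resolve_left (not_not.2 rfl)

theorem IsOrthogonalMatchSet.card_le_sum_maxOO {f : S} {ss : List (Tm S V)}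
    {P : Finset (List ℕ)} (hP : IsOrthogonalMatchSet t (app f ss) P) (hnil : [] ∉ P)
    (ih : ∀ j : Fin ss.length, maxOO t ss[j] ∈ upperBounds (matchCounts t ss[j])) :
    P.card ≤ (ss.map (maxOO t)).sum := by
  have heads : ∀ π ∈ P, ∃ j ∈ Finset.univ.map (Fin.valEmbedding (n := ss.length)),
      ∃ τ, π = j :: τ := by
    rintro (_ | ⟨j, τ⟩) hπ
    · exact absurd hπ hnil
    · obtain ⟨hj, _⟩ := matches_app_cons_iff.1 (hP.1 _ hπ)
      exact ⟨j, Finset.mem_map.2 ⟨⟨j, hj⟩, Finset.mem_univ _, rfl⟩, τ, rfl⟩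
  calc P.card
      ≤ ∑ j ∈ Finset.univ.map Fin.valEmbedding,
          (P.preimage (List.cons j) List.cons_injective.injOn).card :=
        Finset.card_le_sum_card_preimage_cons heads
    _ = ∑ j : Fin ss.length, (P.preimage (List.cons ↑j) List.cons_injective.injOn).card :=
        Finset.sum_map _ _ _
    _ ≤ ∑ j : Fin ss.length, maxOO t ss[j] :=
        Finset.sum_le_sum fun j _ => ih j ⟨_, hP.preimage_cons j, rfl⟩
    _ = (ss.map (maxOO t)).sum := Fin.sum_univ_fun_getElem ss (maxOO t)

end IsOrthogonalMatchSet

theorem sum_maxOO_mem_matchCounts_app {t : Tm S V} {f : S} {ss : List (Tm S V)}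
    (ih : ∀ j : Fin ss.length, maxOO t ss[j] ∈ matchCounts t ss[j]) :
    (ss.map (maxOO t)).sum ∈ matchCounts t (app f ss) := by
  choose W hW hcard using ih
  let prefixIndex : (Σ _ : Fin ss.length, List ℕ) ↪ List ℕ :=
    ⟨fun p => ↑p.1 :: p.2, by
      rintro ⟨i, a⟩ ⟨j, b⟩ h
      obtain ⟨hij, rfl⟩ := List.cons_eq_cons.1 h
      obtain rfl := Fin.ext hij
      rfl⟩
  refine ⟨(Finset.univ.sigma W).map prefixIndex, ⟨?_, ?_⟩, ?_⟩
  · simp only [Finset.mem_map, Finset.mem_sigma, Finset.mem_univ, true_and]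
    rintro _ ⟨⟨j, τ⟩, hτ, rfl⟩
    exact matches_app_cons_iff.2 ⟨j.2, (hW j).1 τ hτ⟩
  · simp only [Finset.coe_map, Finset.coe_sigma, Finset.coe_univ]
    rintro _ ⟨⟨i, a⟩, ha, rfl⟩ _ ⟨⟨j, b⟩, hb, rfl⟩ hne
    refine orthogonal_cons_cons_iff.2 ?_
    by_cases hij : i = j
    · subst hij
      exact .inr ((hW i).2 ha.2 hb.2 fun hab => hne (by obtain rfl : a = b := hab; rfl))
    · exact .inl (Fin.val_injective.ne hij)
  · rw [Finset.card_map, Finset.card_sigma, ← Fin.sum_univ_fun_getElem]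
    exact Finset.sum_congr rfl fun j _ => hcard j

open Classical in
theorem isGreatest_matchCounts_app (t : Tm S V) (f : S) (ss : List (Tm S V))
    (ih : ∀ j : Fin ss.length, IsGreatest (matchCounts t ss[j]) (maxOO t ss[j])) :
    IsGreatest (matchCounts t (app f ss))
      (if Matches t (app f ss) [] then max (ss.map (maxOO t)).sum 1
        else (ss.map (maxOO t)).sum) := by
  have hsum := sum_maxOO_mem_matchCounts_app (f := f) fun j => (ih j).1
  have hbound := fun P (hP : IsOrthogonalMatchSet t (app f ss) P) hnil =>
    hP.card_le_sum_maxOO hnil fun j => (ih j).2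
  split_ifs with hroot
  · refine ⟨?_, ?_⟩
    · rcases max_choice (ss.map (maxOO t)).sum 1 with h | h <;> rw [h]
      exacts [hsum, ⟨_, isOrthogonalMatchSet_singleton hroot, rfl⟩]
    · rintro _ ⟨P, hP, rfl⟩
      by_cases hnil : [] ∈ P
      · exact le_max_of_le_right (hP.card_le_one_of_nil_mem hnil)
      · exact le_max_of_le_left (hbound P hP hnil)
  · refine ⟨hsum, ?_⟩
    rintro _ ⟨P, hP, rfl⟩
    exact hbound P hP fun hnil => hroot (hP.1 _ hnil)

open Classical in
theorem isGreatest_matchCounts_var (t : Tm S V) (x : V) :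
    IsGreatest (matchCounts t (var x)) (if Matches t (var x) [] then 1 else 0) := by
  split_ifs with hroot
  · refine ⟨⟨_, isOrthogonalMatchSet_singleton hroot, rfl⟩, ?_⟩
    rintro _ ⟨P, hP, rfl⟩
    exact Finset.card_le_one.2 fun a ha b hb =>
      (hP.1 a ha).eq_nil_of_var.trans (hP.1 b hb).eq_nil_of_var.symm
  · refine ⟨⟨_, isOrthogonalMatchSet_empty, rfl⟩, ?_⟩
    rintro _ ⟨P, hP, rfl⟩
    refine (Finset.card_eq_zero.2 (Finset.eq_empty_of_forall_notMem fun π hπ => ?_)).le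
    exact hroot ((hP.1 π hπ).eq_nil_of_var ▸ hP.1 π hπ)

theorem isGreatest_maxOO (t : Tm S V) : ∀ s, IsGreatest (matchCounts t s) (maxOO t s)
  | var x => by
    have h := isGreatest_matchCounts_var t x
    rwa [maxOO_eq_of_isGreatest h]
  | app f ss => by
    have h := isGreatest_matchCounts_app t f ss fun j => isGreatest_maxOO t ss[j]
    rwa [maxOO_eq_of_isGreatest h]
decreasing_by
  have := List.sizeOf_lt_of_mem (List.getElem_mem j.2)
  simp only [app.sizeOf_spec, Fin.getElem_fin] at *
  omega

open Classical in
theorem maxOO_app (t : Tm S V) (f : S) (ss : List (Tm S V)) :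
    maxOO t (app f ss) = if Matches t (app f ss) [] then max (ss.map (maxOO t)).sum 1
      else (ss.map (maxOO t)).sum :=
  maxOO_eq_of_isGreatest (isGreatest_matchCounts_app t f ss fun j => isGreatest_maxOO t ss[j])

open Classical in
theorem maxOO_var (t : Tm S V) (x : V) :
    maxOO t (var x) = if Matches t (var x) [] then 1 else 0 :=
  maxOO_eq_of_isGreatest (isGreatest_matchCounts_var t x)

end Tm

/-- The recursion for `maxOO`: for `s = f(s₁,…,s_k)`, `maxOO(t,s)` equals
`max (Σⱼ maxOO(t,sⱼ)) 1` if `t` matches `s` at the root and `Σⱼ maxOO(t,sⱼ)`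
otherwise; for `s` a variable (or constant, covered by `k = 0`), `maxOO(t,s)` is `1`
if `t` matches `s` and `0` otherwise. -/
theorem maxOO_recursion {S V : Type} (t : Tm S V) :
    (∀ (f : S) (ss : List (Tm S V)),
      (Tm.Matches t (Tm.app f ss) [] →
        Tm.maxOO t (Tm.app f ss) = max ((ss.map (Tm.maxOO t)).sum) 1) ∧
      (¬ Tm.Matches t (Tm.app f ss) [] →
        Tm.maxOO t (Tm.app f ss) = (ss.map (Tm.maxOO t)).sum)) ∧
    (∀ x : V,
      (Tm.Matches t (Tm.var x) [] → Tm.maxOO t (Tm.var x) = 1) ∧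
      (¬ Tm.Matches t (Tm.var x) [] → Tm.maxOO t (Tm.var x) = 0)) := by
  refine ⟨fun f ss => ⟨fun h => ?_, fun h => ?_⟩, fun x => ⟨fun h => ?_, fun h => ?_⟩⟩
  · rw [Tm.maxOO_app, if_pos h]
  · rw [Tm.maxOO_app, if_neg h]
  · rw [Tm.maxOO_var, if_pos h]
  · rw [Tm.maxOO_var, if_neg h]
end
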